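/- Let σ ∈ (0,1) and define v(t) = e^{−t}/((1−σ) + σe^{−t}). Suppose u : [0,∞) × ℝ → ℝ is continuously differentiable in t and twice continuously differentiable in x on (0,∞) × ℝ and satisfies ∂_t u(t,x) = (1/2) ∂_{xx} u(t,x) − u(t,x) + σ u(t,x)² there. Define w(t,x) := 1 − u(t,x)/v(t). Then w satisfies ∂_t w(t,x) = (1/2) ∂_{xx} w(t,x) + w(t,x)(1 − w(t,x)) · σ/((1−σ)e^{t} + σ) on (0,∞) × ℝ. -/

import Mathlib

/-!
Writing `u = v (1 - w)`, the Riccati equation `v' = σ v² - v` for the partition function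
cancels the linear and constant parts of the reaction term `-u + σ u²`, leaving the logistic
term `σ v · w (1 - w)`; and `σ v(t) = σ / ((1 - σ) eᵗ + σ)`.
-/

open Real

namespace FKPP

/-- The partition function `v_σ(t) = E[σ^{n(t)-1}]` of the branching system. -/
noncomputable def partitionFunction (σ t : ℝ) : ℝ := exp (-t) / ((1 - σ) + σ * exp (-t))

lemma one_sub_add_mul_exp_neg_pos {σ : ℝ} (hσ0 : 0 ≤ σ) (hσ1 : σ ≤ 1) (t : ℝ) :
    0 < (1 - σ) + σ * exp (-t) := by
  rcases hσ0.lt_or_eq with hσ | rfl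
  · nlinarith [exp_pos (-t)]
  · simp

lemma partitionFunction_pos {σ : ℝ} (hσ0 : 0 ≤ σ) (hσ1 : σ ≤ 1) (t : ℝ) :
    0 < partitionFunction σ t :=
  div_pos (exp_pos _) (one_sub_add_mul_exp_neg_pos hσ0 hσ1 t)

lemma hasDerivAt_partitionFunction {σ t : ℝ} (h : (1 - σ) + σ * exp (-t) ≠ 0) :
    HasDerivAt (partitionFunction σ)
      (σ * partitionFunction σ t ^ 2 - partitionFunction σ t) t := by
  have hexp : HasDerivAt (fun s => exp (-s)) (-exp (-t)) t := by
    simpa using (hasDerivAt_neg t).exp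
  refine (hexp.div ((hexp.const_mul σ).const_add (1 - σ)) h).congr_deriv ?_
  rw [partitionFunction]
  field_simp
  ring

lemma mul_partitionFunction (σ t : ℝ) :
    σ * partitionFunction σ t = σ / ((1 - σ) * exp t + σ) := by
  have hx := (exp_pos t).ne'
  rw [partitionFunction, exp_neg, mul_div_assoc', ← div_eq_mul_inv, ← div_mul_eq_div_div]
  congr 1
  field_simp

lemma hasDerivAt_one_sub_div {σ a t : ℝ} {f g : ℝ → ℝ}
    (hf : HasDerivAt f (a - f t + σ * f t ^ 2) t) (hg : HasDerivAt g (σ * g t ^ 2 - g t) t)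
    (hgt : g t ≠ 0) :
    HasDerivAt (fun τ => 1 - f τ / g τ)
      (-a / g t + (1 - f t / g t) * (1 - (1 - f t / g t)) * (σ * g t)) t := by
  refine ((hf.div hg hgt).const_sub 1).congr_deriv ?_
  field_simp
  ring

end FKPP

open FKPP in
theorem stmt13_general (σ : ℝ) (hσ : σ ∈ Set.Ioo (0 : ℝ) 1)
    (v : ℝ → ℝ) (hv : ∀ t, v t = Real.exp (-t) / ((1 - σ) + σ * Real.exp (-t)))
    (u ut ux uxx : ℝ → ℝ → ℝ)
    (hut : ∀ t > (0 : ℝ), ∀ x, HasDerivAt (fun τ => u τ x) (ut t x) t)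
    (hux : ∀ t > (0 : ℝ), ∀ x, HasDerivAt (fun y => u t y) (ux t x) x)
    (huxx : ∀ t > (0 : ℝ), ∀ x, HasDerivAt (fun y => ux t y) (uxx t x) x)
    (hpde : ∀ t > (0 : ℝ), ∀ x,
      ut t x = (1 / 2) * uxx t x - u t x + σ * (u t x) ^ 2)
    (w : ℝ → ℝ → ℝ) (hw : ∀ t x, w t x = 1 - u t x / v t) :
    ∀ t > (0 : ℝ), ∀ x,
      HasDerivAt (fun τ => w τ x)
        ((1 / 2) * (-(uxx t x) / v t)
          + w t x * (1 - w t x) * (σ / ((1 - σ) * Real.exp t + σ))) t ∧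
      HasDerivAt (fun y => w t y) (-(ux t x) / v t) x ∧
      HasDerivAt (fun y => -(ux t y) / v t) (-(uxx t x) / v t) x := by
  obtain rfl : v = partitionFunction σ := funext hv
  obtain rfl : w = fun t x => 1 - u t x / partitionFunction σ t := funext fun t => funext (hw t)
  intro t ht x
  have hvt := partitionFunction_pos hσ.1.le hσ.2.le t
  refine ⟨?_, ?_, ?_⟩
  · have hwt := hasDerivAt_one_sub_div (hpde t ht x ▸ hut t ht x)
      (hasDerivAt_partitionFunction (one_sub_add_mul_exp_neg_pos hσ.1.le hσ.2.le t).ne') hvt.ne'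
    rw [mul_partitionFunction] at hwt
    exact hwt.congr_deriv (by ring)
  · simpa [neg_div] using ((hux t ht x).div_const _).const_sub 1
  · simpa [neg_div] using (huxx t ht x).neg.div_const _

/-- Lemma 6.1: if `u` solves `∂_t u = ½∂_{xx}u - u + σu²` on `(0,∞) × ℝ` and
`v(t) = e^{-t}/((1-σ)+σe^{-t})`, then `w = 1 - u/v` solves the time-dependent F-KPP
equation `∂_t w = ½∂_{xx}w + w(1-w)·σ/((1-σ)e^t+σ)`. The derivatives of `u` in `t` and
(twice) in `x` are given by the continuous functions `ut`, `ux`, `uxx`. -/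
theorem stmt13 (σ : ℝ) (hσ : σ ∈ Set.Ioo (0 : ℝ) 1)
    (v : ℝ → ℝ) (hv : ∀ t, v t = Real.exp (-t) / ((1 - σ) + σ * Real.exp (-t)))
    (u ut ux uxx : ℝ → ℝ → ℝ)
    (hut : ∀ t > (0 : ℝ), ∀ x, HasDerivAt (fun τ => u τ x) (ut t x) t)
    (hux : ∀ t > (0 : ℝ), ∀ x, HasDerivAt (fun y => u t y) (ux t x) x)
    (huxx : ∀ t > (0 : ℝ), ∀ x, HasDerivAt (fun y => ux t y) (uxx t x) x)
    (hut_cont : ContinuousOn (fun q : ℝ × ℝ => ut q.1 q.2) (Set.Ioi 0 ×ˢ Set.univ))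
    (hux_cont : ContinuousOn (fun q : ℝ × ℝ => ux q.1 q.2) (Set.Ioi 0 ×ˢ Set.univ))
    (huxx_cont : ContinuousOn (fun q : ℝ × ℝ => uxx q.1 q.2) (Set.Ioi 0 ×ˢ Set.univ))
    (hpde : ∀ t > (0 : ℝ), ∀ x,
      ut t x = (1 / 2) * uxx t x - u t x + σ * (u t x) ^ 2)
    (w : ℝ → ℝ → ℝ) (hw : ∀ t x, w t x = 1 - u t x / v t) :
    ∀ t > (0 : ℝ), ∀ x,
      HasDerivAt (fun τ => w τ x)
        ((1 / 2) * (-(uxx t x) / v t)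
          + w t x * (1 - w t x) * (σ / ((1 - σ) * Real.exp t + σ))) t ∧
      HasDerivAt (fun y => w t y) (-(ux t x) / v t) x ∧
      HasDerivAt (fun y => -(ux t y) / v t) (-(uxx t x) / v t) x :=
  stmt13_general σ hσ v hv u ut ux uxx hut hux huxx hpde w hw
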